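/- arXiv:0711.1268 — 5 statements merged into one kernel-verified Lean document; each statement's English description precedes it below -/
import Mathlib

section
/- Let (fₙ)ₙ≥1 be a sequence of [0,∞]-valued random variables on a probability space (Ω, 𝓕, P). Then there exists a sequence gₙ ∈ conv(fₙ, fₙ₊₁, …) (finite convex combinations of the tail of the sequence) which converges almost surely to a random variable g taking values in [0,∞]. -/
/-!
Let `ψ x = exp (-x/2)` on `[0, ∞]`, with `ψ ∞ = 0`: a closed embedding of `[0, ∞]` into `ℝ` with
`ψ ((a + b) / 2) ^ 2 = ψ a * ψ b`. Let `tₙ` be the infimum of `E[ψ(h)²] = E[e^{-h}]` over the convex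
hull of the tail `fₙ, fₙ₊₁, …`; it increases to a limit `T`. The identity gives
  `E[(ψ h₁ - ψ h₂)²] = E[ψ(h₁)²] + E[ψ(h₂)²] - 2 E[ψ((h₁ + h₂)/2)²]`,
and `(h₁ + h₂)/2` again lies in a tail hull, so the last term is at least about `2T`. Hence
near-minimisers taken from deeper and deeper tails make `ψ(gₙ)` Cauchy in `L²` at a geometric
rate, so `ψ(gₙ)` converges a.s., and so does `gₙ` because `ψ` is a closed embedding.
-/

open MeasureTheory Filter Topology
open scoped ENNReal

noncomputable def expNegHalf (x : ℝ≥0∞) : ℝ := if x = ∞ then 0 else Real.exp (-x.toReal / 2)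

@[simp] lemma expNegHalf_top : expNegHalf ∞ = 0 := if_pos rfl

lemma expNegHalf_of_ne_top {x : ℝ≥0∞} (hx : x ≠ ∞) :
    expNegHalf x = Real.exp (-x.toReal / 2) :=
  if_neg hx

lemma expNegHalf_nonneg (x : ℝ≥0∞) : 0 ≤ expNegHalf x := by
  unfold expNegHalf; split_ifs <;> positivity

lemma expNegHalf_le_one (x : ℝ≥0∞) : expNegHalf x ≤ 1 := by
  unfold expNegHalf; split_ifs
  · exact zero_le_one
  · exact Real.exp_le_one_iff.mpr (by linarith [x.toReal_nonneg])

lemma expNegHalf_le_toReal_two_div (x : ℝ≥0∞) : expNegHalf x ≤ (2 / (x + 2)).toReal := by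
  rcases eq_or_ne x ∞ with rfl | hx
  · simp
  rw [expNegHalf_of_ne_top hx, ENNReal.toReal_div, ENNReal.toReal_add hx (by simp),
    ENNReal.toReal_ofNat, le_div_iff₀ (by positivity), neg_div, Real.exp_neg,
    inv_mul_le_iff₀ (Real.exp_pos _)]
  linarith [Real.add_one_le_exp (x.toReal / 2)]

lemma strictAnti_expNegHalf : StrictAnti expNegHalf := by
  intro a b hab
  rcases eq_or_ne b ∞ with rfl | hb
  · rw [expNegHalf_top, expNegHalf_of_ne_top hab.ne]; positivity
  rw [expNegHalf_of_ne_top hb, expNegHalf_of_ne_top (hab.trans_le le_top).ne]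
  gcongr

lemma continuous_expNegHalf : Continuous expNegHalf := by
  refine continuous_iff_continuousAt.2 fun x => ?_
  rcases eq_or_ne x ∞ with rfl | hx
  · have hbound : Tendsto (fun y : ℝ≥0∞ => (2 / (y + 2)).toReal) (𝓝 ∞) (𝓝 0) := by
      have h : Tendsto (fun y : ℝ≥0∞ => 2 / (y + 2)) (𝓝 ∞) (𝓝 0) := by
        simpa using ENNReal.Tendsto.const_div (a := 2)
          ((continuous_add_const (2 : ℝ≥0∞)).tendsto ∞) (by simp)
      exact (ENNReal.tendsto_toReal ENNReal.zero_ne_top).comp h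
    rw [ContinuousAt, expNegHalf_top]
    exact tendsto_of_tendsto_of_tendsto_of_le_of_le tendsto_const_nhds hbound
      expNegHalf_nonneg expNegHalf_le_toReal_two_div
  · have h : ContinuousAt (fun y : ℝ≥0∞ => Real.exp (-y.toReal / 2)) x :=
      Real.continuous_exp.continuousAt.comp ((ENNReal.tendsto_toReal hx).neg.div_const 2)
    exact h.congr <| (eventually_ne_nhds hx).mono fun y hy => (expNegHalf_of_ne_top hy).symm

lemma isClosedEmbedding_expNegHalf : IsClosedEmbedding expNegHalf :=
  continuous_expNegHalf.isClosedEmbedding strictAnti_expNegHalf.injective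

lemma expNegHalf_add_div_two_sq (a b : ℝ≥0∞) :
    expNegHalf ((a + b) / 2) ^ 2 = expNegHalf a * expNegHalf b := by
  rcases eq_or_ne a ∞ with rfl | ha
  · simp [ENNReal.top_div_of_ne_top]
  rcases eq_or_ne b ∞ with rfl | hb
  · simp [ENNReal.top_div_of_ne_top]
  rw [expNegHalf_of_ne_top (by simp [ENNReal.div_eq_top, ha, hb]), expNegHalf_of_ne_top ha,
    expNegHalf_of_ne_top hb, ENNReal.toReal_div, ENNReal.toReal_add ha hb, ENNReal.toReal_ofNat,
    ← Real.exp_add, sq, ← Real.exp_add]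
  ring_nf

lemma Topology.IsClosedEmbedding.exists_tendsto_of_tendsto_comp {X Y ι : Type*}
    [TopologicalSpace X] [TopologicalSpace Y] {e : X → Y} (he : IsClosedEmbedding e)
    {l : Filter ι} [l.NeBot] {x : ι → X} {y : Y} (h : Tendsto (e ∘ x) l (𝓝 y)) :
    ∃ z, Tendsto x l (𝓝 z) := by
  obtain ⟨z, rfl⟩ := he.isClosed_range.mem_of_tendsto h (Eventually.of_forall fun _ => ⟨_, rfl⟩)
  exact ⟨z, he.tendsto_nhds_iff.2 h⟩

def tailConvexHull {α : Type*} (f : ℕ → α → ℝ≥0∞) (n : ℕ) : Set (α → ℝ≥0∞) :=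
  {h | ∃ (s : Finset ℕ) (w : ℕ → ℝ≥0∞), s.Nonempty ∧ (∀ k ∈ s, n ≤ k) ∧
    (∑ k ∈ s, w k) = 1 ∧ ∀ ω, h ω = ∑ k ∈ s, w k * f k ω}

section TailConvexHull

variable {α : Type*} {f : ℕ → α → ℝ≥0∞}

lemma self_mem_tailConvexHull (f : ℕ → α → ℝ≥0∞) (n : ℕ) : f n ∈ tailConvexHull f n :=
  ⟨{n}, fun _ => 1, Finset.singleton_nonempty n, by simp, by simp, by simp⟩

lemma antitone_tailConvexHull : Antitone (tailConvexHull f) := by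
  rintro m n hmn h ⟨s, w, hs, hsn, hw, hh⟩
  exact ⟨s, w, hs, fun k hk => hmn.trans (hsn k hk), hw, hh⟩

lemma measurable_of_mem_tailConvexHull [MeasurableSpace α] (hf : ∀ n, Measurable (f n)) {n : ℕ}
    {h : α → ℝ≥0∞} (hh : h ∈ tailConvexHull f n) : Measurable h := by
  obtain ⟨s, w, -, -, -, hh⟩ := hh
  rw [funext hh]
  exact Finset.measurable_sum s fun k _ => (hf k).const_mul _

lemma add_div_two_mem_tailConvexHull {m n : ℕ} {h₁ h₂ : α → ℝ≥0∞}
    (hh₁ : h₁ ∈ tailConvexHull f m) (hh₂ : h₂ ∈ tailConvexHull f n) :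
    (fun ω => (h₁ ω + h₂ ω) / 2) ∈ tailConvexHull f (min m n) := by
  obtain ⟨s₁, w₁, hs₁, hs₁m, hw₁, hh₁⟩ := hh₁
  obtain ⟨s₂, w₂, -, hs₂n, hw₂, hh₂⟩ := hh₂
  have extend : ∀ (s : Finset ℕ) (c : ℕ → ℝ≥0∞), s ⊆ s₁ ∪ s₂ →
      ∑ k ∈ s₁ ∪ s₂, (s : Set ℕ).indicator c k = ∑ k ∈ s, c k :=
    fun s c hs => Finset.sum_indicator_subset c hs
  refine ⟨s₁ ∪ s₂, fun k => ((s₁ : Set ℕ).indicator w₁ k + (s₂ : Set ℕ).indicator w₂ k) / 2,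
    hs₁.mono Finset.subset_union_left, ?_, ?_, fun ω => ?_⟩
  · intro k hk
    rcases Finset.mem_union.1 hk with hk | hk
    exacts [min_le_left m n |>.trans (hs₁m k hk), min_le_right m n |>.trans (hs₂n k hk)]
  · simp_rw [ENNReal.div_eq_inv_mul, ← Finset.mul_sum, Finset.sum_add_distrib,
      extend _ _ Finset.subset_union_left, extend _ _ Finset.subset_union_right, hw₁, hw₂]
    rw [one_add_one_eq_two, ENNReal.inv_mul_cancel two_ne_zero ENNReal.ofNat_ne_top]
  · simp_rw [ENNReal.div_eq_inv_mul, mul_assoc, ← Finset.mul_sum, add_mul, Finset.sum_add_distrib,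
      ← Set.indicator_mul_left _ w₁ (fun k => f k ω),
      ← Set.indicator_mul_left _ w₂ (fun k => f k ω),
      extend _ _ Finset.subset_union_left, extend _ _ Finset.subset_union_right, hh₁, hh₂]

end TailConvexHull

section Komlos

variable {Ω : Type*} [MeasurableSpace Ω] {μ : Measure Ω}

theorem ae_exists_tendsto_of_integral_sq_sub_le {u : ℕ → Ω → ℝ} (hu : ∀ n, MemLp (u n) 2 μ)
    (hcau : ∀ N n m, N ≤ n → N ≤ m → ∫ ω, (u n ω - u m ω) ^ 2 ∂μ ≤ 4⁻¹ ^ N) :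
    ∀ᵐ ω ∂μ, ∃ l, Tendsto (fun n => u n ω) atTop (𝓝 l) := by
  refine Lp.ae_tendsto_of_cauchy_eLpNorm (fun n => (hu n).1) one_le_two
    (B := fun N => ENNReal.ofReal (2 * 2⁻¹ ^ N)) ?_ fun N n m hn hm => ?_
  · rw [← ENNReal.ofReal_tsum_of_nonneg (fun N => by positivity)
      ((summable_geometric_of_lt_one (by norm_num) (by norm_num)).mul_left 2)]
    exact ENNReal.ofReal_ne_top
  · rw [((hu n).sub (hu m)).eLpNorm_eq_integral_rpow_norm two_ne_zero ENNReal.ofNat_ne_top]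
    refine (ENNReal.ofReal_lt_ofReal_iff (by positivity)).2 ?_
    simp only [Pi.sub_apply, Real.norm_eq_abs, ENNReal.toReal_ofNat, Real.rpow_two, sq_abs]
    have h4 : (4⁻¹ ^ N : ℝ) = (2⁻¹ ^ N) ^ 2 := by rw [← pow_mul, mul_comm, pow_mul]; norm_num
    calc (∫ ω, (u n ω - u m ω) ^ 2 ∂μ) ^ (2⁻¹ : ℝ) ≤ ((2⁻¹ ^ N : ℝ) ^ 2) ^ (2⁻¹ : ℝ) :=
          h4 ▸ Real.rpow_le_rpow (integral_nonneg fun _ => sq_nonneg _) (hcau N n m hn hm)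
            (by norm_num)
      _ = 2⁻¹ ^ N := by exact_mod_cast Real.pow_rpow_inv_natCast (by positivity) two_ne_zero
      _ < 2 * 2⁻¹ ^ N := by linarith [pow_pos (by norm_num : (0 : ℝ) < 2⁻¹) N]

lemma memLp_expNegHalf_comp [IsFiniteMeasure μ] {h : Ω → ℝ≥0∞} (hh : AEMeasurable h μ)
    (p : ℝ≥0∞) : MemLp (fun ω => expNegHalf (h ω)) p μ :=
  .of_bound (continuous_expNegHalf.measurable.comp_aemeasurable hh).aestronglyMeasurable 1
    (ae_of_all _ fun ω => by
      rw [Real.norm_of_nonneg (expNegHalf_nonneg _)]; exact expNegHalf_le_one _)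

lemma integral_sq_sub_expNegHalf [IsFiniteMeasure μ] {h₁ h₂ : Ω → ℝ≥0∞}
    (hh₁ : AEMeasurable h₁ μ) (hh₂ : AEMeasurable h₂ μ) :
    ∫ ω, (expNegHalf (h₁ ω) - expNegHalf (h₂ ω)) ^ 2 ∂μ
      = ∫ ω, expNegHalf (h₁ ω) ^ 2 ∂μ + ∫ ω, expNegHalf (h₂ ω) ^ 2 ∂μ
        - 2 * ∫ ω, expNegHalf ((h₁ ω + h₂ ω) / 2) ^ 2 ∂μ := by
  have i₁ := (memLp_expNegHalf_comp hh₁ 2).integrable_sq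
  have i₂ := (memLp_expNegHalf_comp hh₂ 2).integrable_sq
  have i₁₂ : Integrable (fun ω => expNegHalf (h₁ ω) ^ 2 + expNegHalf (h₂ ω) ^ 2) μ := i₁.add i₂
  have i₃ : Integrable (fun ω => 2 * expNegHalf ((h₁ ω + h₂ ω) / 2) ^ 2) μ :=
    ((memLp_expNegHalf_comp ((hh₁.add hh₂).div_const 2) 2).integrable_sq).const_mul 2
  rw [← integral_add i₁ i₂, ← integral_const_mul, ← integral_sub i₁₂ i₃]
  congr 1 with ω
  rw [expNegHalf_add_div_two_sq]
  ring

noncomputable def tailInf (μ : Measure Ω) (f : ℕ → Ω → ℝ≥0∞) (n : ℕ) : ℝ :=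
  sInf ((fun h => ∫ ω, expNegHalf (h ω) ^ 2 ∂μ) '' tailConvexHull f n)

variable {f : ℕ → Ω → ℝ≥0∞}

lemma bddBelow_image_tailConvexHull (n : ℕ) :
    BddBelow ((fun h => ∫ ω, expNegHalf (h ω) ^ 2 ∂μ) '' tailConvexHull f n) :=
  ⟨0, by rintro _ ⟨h, -, rfl⟩; exact integral_nonneg fun ω => sq_nonneg _⟩

lemma tailInf_le {n : ℕ} {h : Ω → ℝ≥0∞} (hh : h ∈ tailConvexHull f n) :
    tailInf μ f n ≤ ∫ ω, expNegHalf (h ω) ^ 2 ∂μ :=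
  csInf_le (bddBelow_image_tailConvexHull n) ⟨h, hh, rfl⟩

lemma exists_mem_tailConvexHull_lt_tailInf_add (n : ℕ) {ε : ℝ} (hε : 0 < ε) :
    ∃ h ∈ tailConvexHull f n, ∫ ω, expNegHalf (h ω) ^ 2 ∂μ < tailInf μ f n + ε := by
  obtain ⟨_, ⟨h, hh, rfl⟩, hlt⟩ := exists_lt_of_csInf_lt
    ((Set.nonempty_of_mem (self_mem_tailConvexHull f n)).image _) (lt_add_of_pos_right _ hε)
  exact ⟨h, hh, hlt⟩

lemma monotone_tailInf : Monotone (tailInf μ f) := fun _ _ hmn =>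
  csInf_le_csInf (bddBelow_image_tailConvexHull _)
    ((Set.nonempty_of_mem (self_mem_tailConvexHull f _)).image _)
    (Set.image_mono (antitone_tailConvexHull hmn))

lemma tailInf_le_measureReal_univ [IsFiniteMeasure μ] (n : ℕ) :
    tailInf μ f n ≤ μ.real Set.univ :=
  calc tailInf μ f n ≤ ∫ ω, expNegHalf (f n ω) ^ 2 ∂μ := tailInf_le (self_mem_tailConvexHull f n)
    _ ≤ ‖∫ ω, expNegHalf (f n ω) ^ 2 ∂μ‖ := Real.le_norm_self _
    _ ≤ 1 * μ.real Set.univ := norm_integral_le_of_norm_le_const (ae_of_all μ fun ω => by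
      rw [norm_pow, Real.norm_of_nonneg (expNegHalf_nonneg _)]
      exact pow_le_one₀ (expNegHalf_nonneg _) (expNegHalf_le_one _))
    _ = μ.real Set.univ := one_mul _

lemma integral_sq_sub_expNegHalf_le [IsFiniteMeasure μ] (hf : ∀ n, Measurable (f n)) {m n : ℕ}
    {h₁ h₂ : Ω → ℝ≥0∞} (hh₁ : h₁ ∈ tailConvexHull f m) (hh₂ : h₂ ∈ tailConvexHull f n) {T ε : ℝ}
    (h₁T : ∫ ω, expNegHalf (h₁ ω) ^ 2 ∂μ ≤ T + ε) (h₂T : ∫ ω, expNegHalf (h₂ ω) ^ 2 ∂μ ≤ T + ε)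
    (hT : T - ε ≤ tailInf μ f (min m n)) :
    ∫ ω, (expNegHalf (h₁ ω) - expNegHalf (h₂ ω)) ^ 2 ∂μ ≤ 4 * ε := by
  rw [integral_sq_sub_expNegHalf (measurable_of_mem_tailConvexHull hf hh₁).aemeasurable
    (measurable_of_mem_tailConvexHull hf hh₂).aemeasurable]
  linarith [tailInf_le (μ := μ) (add_div_two_mem_tailConvexHull hh₁ hh₂)]

lemma exists_seq_mem_tailConvexHull_integral_sq_sub_le [IsFiniteMeasure μ]
    (hf : ∀ n, Measurable (f n)) :
    ∃ g : ℕ → Ω → ℝ≥0∞, (∀ n, g n ∈ tailConvexHull f n) ∧ ∀ N n m, N ≤ n → N ≤ m →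
      ∫ ω, (expNegHalf (g n ω) - expNegHalf (g m ω)) ^ 2 ∂μ ≤ 4⁻¹ ^ N := by
  set ε : ℕ → ℝ := fun N => 4⁻¹ ^ (N + 1)
  have hε : ∀ N, 0 < ε N := fun N => by positivity
  have hε_anti : Antitone ε := fun a b hab =>
    pow_le_pow_of_le_one (by norm_num) (by norm_num) (by omega)
  obtain ⟨T, hT⟩ : ∃ T, Tendsto (tailInf μ f) atTop (𝓝 T) :=
    ⟨_, tendsto_atTop_ciSup monotone_tailInf
      ⟨μ.real Set.univ, by rintro _ ⟨n, rfl⟩; exact tailInf_le_measureReal_univ n⟩⟩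
  obtain ⟨φ, hφ, hφT⟩ := extraction_forall_of_eventually fun N =>
    hT.eventually (lt_mem_nhds (sub_lt_self T (hε N)))
  choose g hgC hgJ using fun n => exists_mem_tailConvexHull_lt_tailInf_add (μ := μ) (φ n) (hε n)
  refine ⟨g, fun n => antitone_tailConvexHull (hφ.id_le n) (hgC n), fun N n m hn hm => ?_⟩
  have hJ : ∀ k, N ≤ k → ∫ ω, expNegHalf (g k ω) ^ 2 ∂μ ≤ T + ε N := fun k hk =>
    (hgJ k).le.trans (add_le_add (monotone_tailInf.ge_of_tendsto hT _) (hε_anti hk))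
  calc _ ≤ 4 * ε N := integral_sq_sub_expNegHalf_le hf (hgC n) (hgC m) (hJ n hn) (hJ m hm)
          ((hφT N).le.trans (monotone_tailInf (le_min (hφ.monotone hn) (hφ.monotone hm))))
    _ = 4⁻¹ ^ N := by simp only [ε]; ring

end Komlos

/-- Komlos-type lemma: for a sequence of [0,∞]-valued random
variables there are finite convex combinations of the tails converging a.s. -/
theorem komlos_type {Ω : Type*} [MeasurableSpace Ω] (P : Measure Ω) [IsProbabilityMeasure P]
    (f : ℕ → Ω → ENNReal) (hf : ∀ n, Measurable (f n)) :
    ∃ g : ℕ → Ω → ENNReal,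
      (∀ n : ℕ, ∃ (s : Finset ℕ) (w : ℕ → ENNReal), s.Nonempty ∧ (∀ k ∈ s, n ≤ k) ∧
        (∑ k ∈ s, w k) = 1 ∧ ∀ ω, g n ω = ∑ k ∈ s, w k * f k ω) ∧
      ∃ glim : Ω → ENNReal,
        ∀ᵐ ω ∂P, Tendsto (fun n => g n ω) atTop (𝓝 (glim ω)) := by
  obtain ⟨g, hg, hcau⟩ := exists_seq_mem_tailConvexHull_integral_sq_sub_le (μ := P) hf
  have hconv := ae_exists_tendsto_of_integral_sq_sub_le
    (fun n => memLp_expNegHalf_comp (measurable_of_mem_tailConvexHull hf (hg n)).aemeasurable 2)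
    hcau
  refine ⟨g, hg, fun ω => limUnder atTop (g · ω), hconv.mono fun ω ⟨_, hy⟩ => ?_⟩
  exact tendsto_nhds_limUnder (isClosedEmbedding_expNegHalf.exists_tendsto_of_tendsto_comp hy)
end

section
/- Let (Ω₁, μ₁) and (Ω₂, μ₂) be probability spaces and φₙ : Ω₁ → ℝ, ψₙ : Ω₂ → ℝ measurable functions such that φₙ(ω₁) + ψₙ(ω₂) → -∞ in μ₁ ⊗ μ₂-probability. For 0 < α < 1 define the α-quantiles qₙ¹(α) := inf{x : μ₁(φₙ ≥ x) ≤ α} and qₙ²(α) := inf{y : μ₂(ψₙ ≥ y) ≤ α}. Then for each fixed α ∈ (0,1), limₙ (qₙ¹(α) + qₙ²(α)) = -∞. -/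
/-!
If `b < q₁ + q₂`, split `b = x + y` with `x < q₁` and `y < q₂`. By definition of the quantiles,
`μ₁ {x ≤ φₙ} > α` and `μ₂ {y ≤ ψₙ} > α`, so the rectangle `{x ≤ φₙ} × {y ≤ ψₙ}`, which lies in
`{b ≤ φₙ + ψₙ}`, has product measure `> α²`. Convergence in probability to `-∞` rules this out for
large `n`.
-/

open MeasureTheory Filter Topology

section TailQuantile

variable {Ω : Type*} [MeasurableSpace Ω]

noncomputable def tailQuantile (μ : Measure Ω) (f : Ω → ℝ) (β : ENNReal) : ℝ :=
  sInf {x : ℝ | μ {ω | x ≤ f ω} ≤ β}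

lemma bddBelow_setOf_measure_le {μ : Measure Ω} (f : Ω → ℝ) {β : ENNReal}
    (hβ : β < μ Set.univ) : BddBelow {x : ℝ | μ {ω | x ≤ f ω} ≤ β} := by
  have hmono : Monotone fun k : ℕ => {ω | -(k : ℝ) ≤ f ω} := fun k l hkl ω hω =>
    show -(l : ℝ) ≤ f ω from (neg_le_neg (Nat.cast_le.mpr hkl)).trans hω
  have hunion : (⋃ k : ℕ, {ω | -(k : ℝ) ≤ f ω}) = Set.univ :=
    Set.eq_univ_of_forall fun ω =>
      let ⟨k, hk⟩ := exists_nat_ge (-f ω)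
      Set.mem_iUnion.mpr ⟨k, show -(k : ℝ) ≤ f ω by linarith⟩
  have htend := tendsto_measure_iUnion_atTop (μ := μ) hmono
  rw [hunion] at htend
  obtain ⟨k, hk⟩ := (htend.eventually_const_lt hβ).exists
  refine ⟨-(k : ℝ), fun x hx => le_of_not_gt fun hlt => ?_⟩
  have hsub : {ω | -(k : ℝ) ≤ f ω} ⊆ {ω | x ≤ f ω} := fun ω hω => hlt.le.trans hω
  exact (hk.trans_le (measure_mono hsub)).not_ge hx

lemma lt_measure_setOf_le_of_lt_tailQuantile {μ : Measure Ω} {f : Ω → ℝ} {β : ENNReal}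
    (hβ : β < μ Set.univ) {x : ℝ} (hx : x < tailQuantile μ f β) : β < μ {ω | x ≤ f ω} :=
  not_le.mp (notMem_of_lt_csInf (s := {x : ℝ | μ {ω | x ≤ f ω} ≤ β}) hx
    (bddBelow_setOf_measure_le f hβ))

end TailQuantile

lemma mul_lt_measure_prod_of_lt_tailQuantile_add {Ω₁ Ω₂ : Type*} [MeasurableSpace Ω₁]
    [MeasurableSpace Ω₂] {μ₁ : Measure Ω₁} {μ₂ : Measure Ω₂} [SFinite μ₂]
    {f : Ω₁ → ℝ} {g : Ω₂ → ℝ} {β₁ β₂ : ENNReal}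
    (hβ₁ : β₁ < μ₁ Set.univ) (hβ₂ : β₂ < μ₂ Set.univ) {b : ℝ}
    (hb : b < tailQuantile μ₁ f β₁ + tailQuantile μ₂ g β₂) :
    β₁ * β₂ < μ₁.prod μ₂ {p | b ≤ f p.1 + g p.2} := by
  obtain ⟨x, hx₂, hx₁⟩ := exists_between (sub_lt_iff_lt_add.mpr hb)
  have hrect : {ω | x ≤ f ω} ×ˢ {ω | b - x ≤ g ω} ⊆ {p : Ω₁ × Ω₂ | b ≤ f p.1 + g p.2} :=
    fun p ⟨(h₁ : x ≤ f p.1), (h₂ : b - x ≤ g p.2)⟩ => show b ≤ f p.1 + g p.2 by linarith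
  calc β₁ * β₂ < μ₁ {ω | x ≤ f ω} * μ₂ {ω | b - x ≤ g ω} :=
        ENNReal.mul_lt_mul (lt_measure_setOf_le_of_lt_tailQuantile hβ₁ hx₁)
          (lt_measure_setOf_le_of_lt_tailQuantile hβ₂ (by linarith))
    _ = μ₁.prod μ₂ ({ω | x ≤ f ω} ×ˢ {ω | b - x ≤ g ω}) := (Measure.prod_prod _ _).symm
    _ ≤ μ₁.prod μ₂ {p | b ≤ f p.1 + g p.2} := measure_mono hrect

theorem quantile_sum_tendsto_bot_general
    {Ω₁ Ω₂ : Type*} [MeasurableSpace Ω₁] [MeasurableSpace Ω₂]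
    (μ₁ : Measure Ω₁) (μ₂ : Measure Ω₂) [IsProbabilityMeasure μ₁] [IsProbabilityMeasure μ₂]
    (φ : ℕ → Ω₁ → ℝ) (ψ : ℕ → Ω₂ → ℝ)
    (hconv : ∀ M : ℝ,
      Tendsto (fun n => (μ₁.prod μ₂) {p | M ≤ φ n p.1 + ψ n p.2}) atTop (𝓝 0))
    (α : ℝ) (hα0 : 0 < α) (hα1 : α < 1)
    (q1 q2 : ℕ → ℝ)
    (hq1 : ∀ n, q1 n = sInf {x : ℝ | μ₁ {ω | x ≤ φ n ω} ≤ ENNReal.ofReal α})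
    (hq2 : ∀ n, q2 n = sInf {y : ℝ | μ₂ {ω | y ≤ ψ n ω} ≤ ENNReal.ofReal α}) :
    Tendsto (fun n => q1 n + q2 n) atTop atBot := by
  have hα_pos : 0 < ENNReal.ofReal α * ENNReal.ofReal α :=
    have := (ENNReal.ofReal_pos.mpr hα0).ne'
    ENNReal.mul_pos this this
  have hα_lt : ENNReal.ofReal α < μ₁ Set.univ ∧ ENNReal.ofReal α < μ₂ Set.univ := by
    simpa only [measure_univ, and_self] using ENNReal.ofReal_lt_one.mpr hα1
  refine tendsto_atBot.mpr fun b => ?_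
  filter_upwards [(hconv b).eventually_lt_const hα_pos] with n hn
  by_contra! hb
  rw [hq1, hq2] at hb
  exact hn.not_gt (mul_lt_measure_prod_of_lt_tailQuantile_add hα_lt.1 hα_lt.2 hb)

/-- if φₙ(ω₁) + ψₙ(ω₂) → -∞ in μ₁ ⊗ μ₂-probability, then for each
fixed α ∈ (0,1) the sum of the α-quantiles qₙ¹(α) + qₙ²(α) tends to -∞. -/
theorem quantile_sum_tendsto_bot
    {Ω₁ Ω₂ : Type*} [MeasurableSpace Ω₁] [MeasurableSpace Ω₂]
    (μ₁ : Measure Ω₁) (μ₂ : Measure Ω₂) [IsProbabilityMeasure μ₁] [IsProbabilityMeasure μ₂]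
    (φ : ℕ → Ω₁ → ℝ) (ψ : ℕ → Ω₂ → ℝ)
    (hφ : ∀ n, Measurable (φ n)) (hψ : ∀ n, Measurable (ψ n))
    (hconv : ∀ M : ℝ,
      Tendsto (fun n => (μ₁.prod μ₂) {p | M ≤ φ n p.1 + ψ n p.2}) atTop (𝓝 0))
    (α : ℝ) (hα0 : 0 < α) (hα1 : α < 1)
    (q1 q2 : ℕ → ℝ)
    (hq1 : ∀ n, q1 n = sInf {x : ℝ | μ₁ {ω | x ≤ φ n ω} ≤ ENNReal.ofReal α})
    (hq2 : ∀ n, q2 n = sInf {y : ℝ | μ₂ {ω | y ≤ ψ n ω} ≤ ENNReal.ofReal α}) :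
    Tendsto (fun n => q1 n + q2 n) atTop atBot :=
  quantile_sum_tendsto_bot_general μ₁ μ₂ φ ψ hconv α hα0 hα1 q1 q2 hq1 hq2
end

section
/- Let X, Y be Polish spaces, c : X × Y → [0,∞] lower semi-continuous, μ, ν Borel probability measures on X, Y, and π ∈ Π(μ,ν) a strongly c-monotone transport plan (i.e., there exist Borel functions φ : X → ℝ ∪ {-∞}, ψ : Y → ℝ ∪ {-∞} with φ(x) + ψ(y) ≤ c(x,y) everywhere and equality π-almost surely). Then π minimizes I(π') = ∫ c dπ' over all π' ∈ Π(μ,ν). -/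
/-!
The potentials need not be integrable, so truncate them at level `n`:
`φₙ = max (min φ n) (-n)` and likewise `ψₙ`. These are bounded, `φₙ(x) + ψₙ(y) ≤ c(x, y)`
still holds everywhere after taking positive parts, and `φₙ + ψₙ ≥ 0`, `φₙ + ψₙ → c` hold
`π`-a.e. As `∫ (φₙ(x) + ψₙ(y)) dπ' = ∫ φₙ dμ + ∫ ψₙ dν` is the same for every plan `π'`,
Fatou's lemma gives `∫ c dπ ≤ liminf ∫ (φₙ + ψₙ) dπ = liminf ∫ (φₙ + ψₙ) dπ' ≤ ∫ c dπ'`.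
-/

open MeasureTheory Filter Topology

lemma max_min_add_max_min_le {k : ℝ} (hk : 0 ≤ k) (a b : ℝ) :
    max (min a k) (-k) + max (min b k) (-k) ≤ max (a + b) 0 := by
  simp only [max_def, min_def]
  split_ifs <;> linarith

lemma max_min_add_max_min_nonneg {k a b : ℝ} (hab : 0 ≤ a + b) :
    0 ≤ max (min a k) (-k) + max (min b k) (-k) := by
  simp only [max_def, min_def]
  split_ifs <;> linarith

namespace EReal

noncomputable def truncate (k : ℝ) (a : EReal) : ℝ := (max (min a k) (-k)).toReal

variable {k : ℝ}

lemma coe_truncate (k : ℝ) (a : EReal) : (truncate k a : EReal) = max (min a k) (-k) := by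
  refine coe_toReal (ne_of_lt ?_) (ne_bot_of_le_ne_bot (coe_ne_bot (-k)) (le_max_right _ _))
  exact max_lt ((min_le_right _ _).trans_lt (coe_lt_top k)) (coe_lt_top (-k))

@[simp]
lemma truncate_coe (k x : ℝ) : truncate k x = max (min x k) (-k) := by
  rw [truncate, ← coe_neg, ← coe_strictMono.monotone.map_min, ← coe_strictMono.monotone.map_max,
    toReal_coe]

@[simp]
lemma truncate_bot (k : ℝ) : truncate k ⊥ = -k := by
  simp [truncate]

@[simp]
lemma truncate_top (hk : 0 ≤ k) : truncate k ⊤ = k := by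
  simp [truncate, ← coe_neg, hk]

lemma neg_le_truncate (k : ℝ) (a : EReal) : -k ≤ truncate k a := by
  rw [← EReal.coe_le_coe_iff, coe_truncate, coe_neg]
  exact le_max_right _ _

lemma truncate_le (hk : 0 ≤ k) (a : EReal) : truncate k a ≤ k := by
  rw [← EReal.coe_le_coe_iff, coe_truncate]
  exact max_le (min_le_right _ _) (EReal.coe_le_coe_iff.2 (by linarith))

lemma measurable_truncate (k : ℝ) : Measurable (truncate k) :=
  ((measurable_id.min measurable_const).max measurable_const).ereal_toReal

lemma tendsto_truncate (a : EReal) :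
    Tendsto (fun n : ℕ => (truncate n a : EReal)) atTop (𝓝 a) := by
  have hn : Tendsto (fun n : ℕ => ((n : ℝ) : EReal)) atTop (𝓝 ⊤) :=
    tendsto_coe_nhds_top_iff.2 tendsto_natCast_atTop_atTop
  have hneg : Tendsto (fun n : ℕ => -((n : ℝ) : EReal)) atTop (𝓝 ⊥) := by
    rw [← neg_top]
    exact (continuous_neg.tendsto ⊤).comp hn
  simpa [coe_truncate] using ((tendsto_const_nhds (x := a)).min hn).max hneg

lemma ofReal_truncate_add_truncate_le (hk : 0 ≤ k) {a b : EReal} {c : ENNReal}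
    (h : a + b ≤ c) : ENNReal.ofReal (truncate k a + truncate k b) ≤ c := by
  by_cases hbot : a = ⊥ ∨ b = ⊥
  · have ha := truncate_le hk a
    have hb := truncate_le hk b
    refine (ENNReal.ofReal_of_nonpos ?_).trans_le bot_le
    rcases hbot with rfl | rfl <;> simp only [truncate_bot] at * <;> linarith
  push Not at hbot
  by_cases htop : a = ⊤ ∨ b = ⊤
  · suffices c = ⊤ by simp [this]
    rcases htop with rfl | rfl <;> simpa [top_add_of_ne_bot, add_top_of_ne_bot, hbot] using h
  push Not at htop
  lift a to ℝ using ⟨htop.1, hbot.1⟩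
  lift b to ℝ using ⟨htop.2, hbot.2⟩
  calc ENNReal.ofReal (truncate k a + truncate k b)
      ≤ ENNReal.ofReal (max (a + b) 0) := by
        rw [truncate_coe, truncate_coe]
        exact ENNReal.ofReal_le_ofReal (max_min_add_max_min_le hk a b)
    _ = ((a + b : ℝ) : EReal).toENNReal := by rw [real_coe_toENNReal]; simp
    _ ≤ c := toENNReal_coe (x := c) ▸ toENNReal_le_toENNReal (by exact_mod_cast h)

lemma truncate_add_truncate_nonneg (hk : 0 ≤ k) {a b : EReal} (h : 0 ≤ a + b) :
    0 ≤ truncate k a + truncate k b := by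
  by_cases htop : a = ⊤ ∨ b = ⊤
  · have ha := neg_le_truncate k a
    have hb := neg_le_truncate k b
    rcases htop with rfl | rfl <;> simp only [truncate_top hk] at * <;> linarith
  push Not at htop
  have ha : a ≠ ⊥ := by rintro rfl; simp at h
  have hb : b ≠ ⊥ := by rintro rfl; simp at h
  lift a to ℝ using ⟨htop.1, ha⟩
  lift b to ℝ using ⟨htop.2, hb⟩
  rw [truncate_coe, truncate_coe]
  exact max_min_add_max_min_nonneg (by exact_mod_cast h)

lemma tendsto_ofReal_truncate_add_truncate {a b : EReal} {c : ENNReal} (h : a + b = c) :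
    Tendsto (fun n : ℕ => ENNReal.ofReal (truncate n a + truncate n b)) atTop (𝓝 c) := by
  have ha : a ≠ ⊥ := by rintro rfl; simp [(coe_ennreal_ne_bot c).symm] at h
  have hb : b ≠ ⊥ := by rintro rfl; simp [(coe_ennreal_ne_bot c).symm] at h
  have hsum := (continuousAt_add (.inr hb) (.inl ha)).tendsto.comp
    ((tendsto_truncate a).prodMk_nhds (tendsto_truncate b))
  rw [← toENNReal_coe (x := c), ← h]
  exact (continuous_toENNReal.tendsto _).comp hsum

lemma integrable_truncate_comp {α : Type*} [MeasurableSpace α] {μ : Measure α}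
    [IsFiniteMeasure μ] (hk : 0 ≤ k) {φ : α → EReal} (hφ : Measurable φ) : Integrable (fun a => truncate k (φ a)) μ :=
  .of_bound ((measurable_truncate k).comp hφ).aestronglyMeasurable k <|
    ae_of_all _ fun _ => abs_le.2 ⟨neg_le_truncate k _, truncate_le hk _⟩

end EReal

namespace MeasureTheory

variable {α X Y : Type*} [MeasurableSpace α] [MeasurableSpace X] [MeasurableSpace Y]

theorem ofReal_integral_le_lintegral_ofReal {μ : Measure α} (f : α → ℝ) :
    ENNReal.ofReal (∫ a, f a ∂μ) ≤ ∫⁻ a, ENNReal.ofReal (f a) ∂μ := by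
  by_cases hf : Integrable f μ
  · calc ENNReal.ofReal (∫ a, f a ∂μ) ≤ ENNReal.ofReal (∫ a, max (f a) 0 ∂μ) :=
          ENNReal.ofReal_le_ofReal (integral_mono hf hf.pos_part fun a => le_max_left _ _)
      _ = ∫⁻ a, ENNReal.ofReal (max (f a) 0) ∂μ :=
          ofReal_integral_eq_lintegral_ofReal hf.pos_part (ae_of_all _ fun a => le_max_right _ _)
      _ = ∫⁻ a, ENNReal.ofReal (f a) ∂μ := by simp
  · simp [integral_undef hf]

theorem integrable_fst_add_snd_of_map_eq {μ : Measure X} {ν : Measure Y} {σ : Measure (X × Y)}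
    (h1 : σ.map Prod.fst = μ) (h2 : σ.map Prod.snd = ν) {f : X → ℝ} {g : Y → ℝ}
    (hf : Integrable f μ) (hg : Integrable g ν) : Integrable (fun p => f p.1 + g p.2) σ := by
  subst h1 h2
  exact (hf.comp_measurable measurable_fst).add (hg.comp_measurable measurable_snd)

theorem integral_fst_add_snd_of_map_eq {μ : Measure X} {ν : Measure Y} {σ : Measure (X × Y)}
    (h1 : σ.map Prod.fst = μ) (h2 : σ.map Prod.snd = ν) {f : X → ℝ} {g : Y → ℝ}
    (hf : Integrable f μ) (hg : Integrable g ν) :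
    ∫ p, (f p.1 + g p.2) ∂σ = ∫ x, f x ∂μ + ∫ y, g y ∂ν := by
  subst h1 h2
  rw [integral_map measurable_fst.aemeasurable hf.aestronglyMeasurable,
    integral_map measurable_snd.aemeasurable hg.aestronglyMeasurable]
  exact integral_add (hf.comp_measurable measurable_fst) (hg.comp_measurable measurable_snd)

end MeasureTheory

open EReal

theorem strongly_cMonotone_is_optimal_general
    {X Y : Type*} [MeasurableSpace X] [MeasurableSpace Y]
    (c : X × Y → ENNReal)
    (μ : Measure X) (ν : Measure Y) [IsProbabilityMeasure μ] [IsProbabilityMeasure ν]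
    (π : Measure (X × Y))
    (hπ1 : π.map Prod.fst = μ) (hπ2 : π.map Prod.snd = ν)
    (φ : X → EReal) (ψ : Y → EReal) (hφm : Measurable φ) (hψm : Measurable ψ)
    (hineq : ∀ x y, φ x + ψ y ≤ (c (x, y) : EReal))
    (heq : ∀ᵐ p ∂π, φ p.1 + ψ p.2 = (c p : EReal)) :
    ∀ π' : Measure (X × Y), IsProbabilityMeasure π' →
      π'.map Prod.fst = μ → π'.map Prod.snd = ν →
      ∫⁻ p, c p ∂π ≤ ∫⁻ p, c p ∂π' := by
  intro π' _ hπ'1 hπ'2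
  let F : ℕ → X × Y → ℝ := fun n p => truncate n (φ p.1) + truncate n (ψ p.2)
  have hφ_int (n : ℕ) := integrable_truncate_comp (μ := μ) n.cast_nonneg hφm
  have hψ_int (n : ℕ) := integrable_truncate_comp (μ := ν) n.cast_nonneg hψm
  have hF_meas (n : ℕ) : Measurable fun p => ENNReal.ofReal (F n p) :=
    (((measurable_truncate n).comp (hφm.comp measurable_fst)).add
      ((measurable_truncate n).comp (hψm.comp measurable_snd))).ennreal_ofReal
  calc ∫⁻ p, c p ∂π = ∫⁻ p, liminf (fun n => ENNReal.ofReal (F n p)) atTop ∂π :=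
        lintegral_congr_ae <| heq.mono fun p hp =>
          (tendsto_ofReal_truncate_add_truncate hp).liminf_eq.symm
    _ ≤ liminf (fun n => ∫⁻ p, ENNReal.ofReal (F n p) ∂π) atTop := lintegral_liminf_le hF_meas
    _ = liminf (fun n => ENNReal.ofReal (∫ p, F n p ∂π)) atTop := by
        congr with n
        refine (ofReal_integral_eq_lintegral_ofReal
          (integrable_fst_add_snd_of_map_eq hπ1 hπ2 (hφ_int n) (hψ_int n)) ?_).symm
        exact heq.mono fun p hp =>
          truncate_add_truncate_nonneg n.cast_nonneg (hp ▸ coe_ennreal_nonneg _)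
    _ = liminf (fun n => ENNReal.ofReal (∫ p, F n p ∂π')) atTop := by
        simp only [F, integral_fst_add_snd_of_map_eq hπ1 hπ2 (hφ_int _) (hψ_int _),
          integral_fst_add_snd_of_map_eq hπ'1 hπ'2 (hφ_int _) (hψ_int _)]
    _ ≤ liminf (fun _ => ∫⁻ p, c p ∂π') atTop := liminf_le_liminf <| .of_forall fun n =>
        (ofReal_integral_le_lintegral_ofReal _).trans <| lintegral_mono fun p =>
          ofReal_truncate_add_truncate_le n.cast_nonneg (hineq p.1 p.2)
    _ = ∫⁻ p, c p ∂π' := liminf_const _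

/-- Main Theorem: a strongly c-monotone transport plan π ∈ Π(μ,ν)
minimizes the Monge–Kantorovich cost over all transport plans. -/
theorem strongly_cMonotone_is_optimal
    {X Y : Type*} [TopologicalSpace X] [PolishSpace X] [MeasurableSpace X] [BorelSpace X]
    [TopologicalSpace Y] [PolishSpace Y] [MeasurableSpace Y] [BorelSpace Y]
    (c : X × Y → ENNReal) (hc : LowerSemicontinuous c)
    (μ : Measure X) (ν : Measure Y) [IsProbabilityMeasure μ] [IsProbabilityMeasure ν]
    (π : Measure (X × Y)) [IsProbabilityMeasure π]
    (hπ1 : π.map Prod.fst = μ) (hπ2 : π.map Prod.snd = ν)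
    (φ : X → EReal) (ψ : Y → EReal) (hφm : Measurable φ) (hψm : Measurable ψ)
    (hφtop : ∀ x, φ x ≠ ⊤) (hψtop : ∀ y, ψ y ≠ ⊤)
    (hineq : ∀ x y, φ x + ψ y ≤ (c (x, y) : EReal))
    (heq : ∀ᵐ p ∂π, φ p.1 + ψ p.2 = (c p : EReal)) :
    ∀ π' : Measure (X × Y), IsProbabilityMeasure π' →
      π'.map Prod.fst = μ → π'.map Prod.snd = ν →
      ∫⁻ p, c p ∂π ≤ ∫⁻ p, c p ∂π' :=
  strongly_cMonotone_is_optimal_general c μ ν π hπ1 hπ2 φ ψ hφm hψm hineq heq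
end

section
/- Let X, Y be Polish spaces, c : X × Y → [0,∞) finitely valued and lower semi-continuous, and π a c-monotone transport plan in Π(μ,ν). Then there exists a c-monotone Borel set Γ = ⋃_{k≥1} Γ_k with each Γ_k compact, c restricted to each Γ_k continuous, and π(Γ) = 1. -/
/-! Subsets of a c-monotone set are c-monotone, so it suffices to exhaust `Γ'` up to a `π`-null
set by countably many compact sets on which `c` (Borel, being lower semicontinuous) is
continuous. This is Lusin's theorem, proved here by passing to a finer Polish topology in which
`c` is continuous: it has the same Borel sets, so `π` is still tight, and on a compact set for
the finer topology the two topologies agree. -/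

open MeasureTheory

/-- A set Γ ⊆ X × Y is c-monotone (c-cyclically monotone). -/
def CMonotone {X Y : Type*} (c : X × Y → ENNReal) (Γ : Set (X × Y)) : Prop :=
  ∀ (n : ℕ), 1 ≤ n → ∀ (x : Fin n → X) (y : Fin n → Y), (∀ i, (x i, y i) ∈ Γ) →
    ∀ σ : Equiv.Perm (Fin n), ∑ i, c (x i, y i) ≤ ∑ i, c (x i, y (σ i))

theorem ContinuousOn.of_le_of_isCompact {α β : Type*} {t t' : TopologicalSpace α} [@T2Space α t]
    [TopologicalSpace β] (htt' : t' ≤ t) {f : α → β} {K : Set α}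
    (hK : @IsCompact α t' K) (hf : @ContinuousOn α β t' _ f K) : @ContinuousOn α β t _ f K := by
  refine (@continuousOn_iff_isClosed α β t _ f K).2 fun C hC =>
    ⟨f ⁻¹' C ∩ K, ?_, by rw [Set.inter_assoc, Set.inter_self]⟩
  obtain ⟨u, hu, hfu⟩ := (@continuousOn_iff_isClosed α β t' _ f K).1 hf C hC
  have h : @IsCompact α t' (f ⁻¹' C ∩ K) := hfu ▸ @IsCompact.inter_left α t' _ _ hK hu
  have h' : @IsCompact α t (id '' (f ⁻¹' C ∩ K)) :=
    @IsCompact.image α α t' t _ id h (continuous_id_of_le htt')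
  simpa using @IsCompact.isClosed α t _ _ h'

theorem Measurable.exists_isCompact_continuousOn_measure_sdiff_lt {α β : Type*}
    [t : TopologicalSpace α] [hα : PolishSpace α] [MeasurableSpace α] [BorelSpace α]
    [TopologicalSpace β] [MeasurableSpace β] [OpensMeasurableSpace β] [SecondCountableTopology β]
    (μ : Measure α) [IsFiniteMeasure μ] {f : α → β} (hf : Measurable f)
    {A : Set α} (hA : MeasurableSet A) {ε : ENNReal} (hε : ε ≠ 0) :
    ∃ K ⊆ A, IsCompact K ∧ ContinuousOn f K ∧ μ (A \ K) < ε := by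
  obtain ⟨t', ht't, hft', ht'polish⟩ := hf.exists_continuous
  obtain ⟨K, hKA, hK, hμK⟩ : ∃ K ⊆ A, @IsCompact α t' K ∧ μ (A \ K) < ε := by
    have : @BorelSpace α t' _ := ⟨(@BorelSpace.measurable_eq α t _ _).trans
      (@borel_eq_borel_of_le α t' t ht'polish hα ht't).symm⟩
    exact hA.exists_isCompact_sdiff_lt (measure_ne_top μ A) hε
  refine ⟨K, hKA, ?_, ContinuousOn.of_le_of_isCompact ht't hK hft'.continuousOn, hμK⟩
  simpa using @IsCompact.image α α t' t _ id hK (continuous_id_of_le ht't)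

theorem Measurable.exists_seq_isCompact_continuousOn_measure_sdiff_iUnion_eq_zero {α β : Type*}
    [TopologicalSpace α] [PolishSpace α] [MeasurableSpace α] [BorelSpace α]
    [TopologicalSpace β] [MeasurableSpace β] [OpensMeasurableSpace β] [SecondCountableTopology β]
    (μ : Measure α) [IsFiniteMeasure μ] {f : α → β} (hf : Measurable f)
    {A : Set α} (hA : MeasurableSet A) :
    ∃ K : ℕ → Set α, (∀ n, K n ⊆ A) ∧ (∀ n, IsCompact (K n)) ∧ (∀ n, ContinuousOn f (K n)) ∧
      μ (A \ ⋃ n, K n) = 0 := by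
  choose K hKA hK hfK hμK using fun n : ℕ =>
    hf.exists_isCompact_continuousOn_measure_sdiff_lt μ hA
      (ENNReal.inv_ne_zero.2 (ENNReal.natCast_ne_top n))
  refine ⟨K, hKA, hK, hfK, le_antisymm ?_ zero_le⟩
  refine ge_of_tendsto' ENNReal.tendsto_inv_nat_nhds_zero fun n => ?_
  exact (measure_mono (Set.sdiff_subset_sdiff_right (Set.subset_iUnion K n))).trans (hμK n).le

theorem CMonotone.mono {X Y : Type*} {c : X × Y → ENNReal} {Γ Γ' : Set (X × Y)}
    (hΓ' : CMonotone c Γ') (hΓ : Γ ⊆ Γ') : CMonotone c Γ :=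
  fun n hn x y hxy => hΓ' n hn x y fun i => hΓ (hxy i)

theorem cMonotone_concentrated_on_sigma_compact_general
    {X Y : Type*} [TopologicalSpace X] [PolishSpace X] [MeasurableSpace X] [BorelSpace X]
    [TopologicalSpace Y] [PolishSpace Y] [MeasurableSpace Y] [BorelSpace Y]
    (c : X × Y → ENNReal) (hc : LowerSemicontinuous c)
    (π : Measure (X × Y)) [IsProbabilityMeasure π]
    (Γ' : Set (X × Y)) (hΓ'm : MeasurableSet Γ') (hΓ' : CMonotone c Γ') (hπΓ' : π Γ' = 1) :
    ∃ Γk : ℕ → Set (X × Y),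
      (∀ k, IsCompact (Γk k)) ∧
      (∀ k, Continuous fun p : Γk k => c p) ∧
      CMonotone c (⋃ k, Γk k) ∧
      π (⋃ k, Γk k) = 1 := by
  obtain ⟨Γk, hΓkΓ', hΓk, hcΓk, hπnull⟩ :=
    hc.measurable.exists_seq_isCompact_continuousOn_measure_sdiff_iUnion_eq_zero π hΓ'm
  refine ⟨Γk, hΓk, fun k => (hcΓk k).domRestrict, hΓ'.mono (Set.iUnion_subset hΓkΓ'), ?_⟩
  exact le_antisymm prob_le_one (hπΓ' ▸ measure_mono_ae (ae_le_set.2 hπnull))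

/-- a c-monotone transport plan (for finite lsc c) is concentrated
on a c-monotone set Γ = ⋃ₖ Γₖ with Γₖ compact and c|Γₖ continuous. -/
theorem cMonotone_concentrated_on_sigma_compact
    {X Y : Type*} [TopologicalSpace X] [PolishSpace X] [MeasurableSpace X] [BorelSpace X]
    [TopologicalSpace Y] [PolishSpace Y] [MeasurableSpace Y] [BorelSpace Y]
    (c : X × Y → ENNReal) (hc : LowerSemicontinuous c) (hfin : ∀ p, c p ≠ ⊤)
    (μ : Measure X) (ν : Measure Y) [IsProbabilityMeasure μ] [IsProbabilityMeasure ν]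
    (π : Measure (X × Y)) [IsProbabilityMeasure π]
    (hπ1 : π.map Prod.fst = μ) (hπ2 : π.map Prod.snd = ν)
    (Γ' : Set (X × Y)) (hΓ'm : MeasurableSet Γ') (hΓ' : CMonotone c Γ') (hπΓ' : π Γ' = 1) :
    ∃ Γk : ℕ → Set (X × Y),
      (∀ k, IsCompact (Γk k)) ∧
      (∀ k, Continuous fun p : Γk k => c p) ∧
      CMonotone c (⋃ k, Γk k) ∧
      π (⋃ k, Γk k) = 1 :=
  cMonotone_concentrated_on_sigma_compact_general c hc π Γ' hΓ'm hΓ' hπΓ'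
end

section
/- Let X, Y be Polish spaces and c : X × Y → [0,∞) continuous. If πₙ → π weakly and each πₙ is concentrated on a c-monotone set (e.g., supp πₙ is c-monotone), then supp π is c-monotone, i.e., for all m, all (x₁,y₁),…,(xₘ,yₘ) ∈ supp π, and all permutations σ: ∑ c(xᵢ,yᵢ) ≤ ∑ c(xᵢ,y_{σ(i)}). -/
open MeasureTheory Filter Topology

/-- The (topological) support of a measure: points all of whose open
neighbourhoods have positive measure. -/
def msupport {Z : Type*} [TopologicalSpace Z] [MeasurableSpace Z] (μ : Measure Z) :
    Set Z := {z | ∀ U : Set Z, IsOpen U → z ∈ U → 0 < μ U}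

lemma msupport_eq_support {Z : Type*} [TopologicalSpace Z] [MeasurableSpace Z]
    (μ : Measure Z) : msupport μ = μ.support := by
  ext z
  simp only [msupport, Measure.support_eq_forall_isOpen, Set.mem_ofPred_eq]
  exact forall_congr' fun U => forall_comm

lemma isOpen_setOf_sum_comp_perm_lt {ι X Y M : Type*} [Fintype ι] [TopologicalSpace X]
    [TopologicalSpace Y] [AddCommMonoid M] [TopologicalSpace M] [ContinuousAdd M]
    [LinearOrder M] [OrderClosedTopology M] {c : X × Y → M} (hc : Continuous c)
    (σ : Equiv.Perm ι) :
    IsOpen {q : ι → X × Y | ∑ i, c ((q i).1, (q (σ i)).2) < ∑ i, c (q i)} := by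
  refine isOpen_lt (continuous_finsetSum _ fun i _ => hc.comp ?_)
    (continuous_finsetSum _ fun i _ => hc.comp (continuous_apply i))
  exact ((continuous_apply i).fst).prodMk (continuous_apply (σ i)).snd

namespace MeasureTheory.ProbabilityMeasure

variable {Ω ι : Type*} [MeasurableSpace Ω] [TopologicalSpace Ω] [OpensMeasurableSpace Ω]
  [HasOuterApproxClosed Ω] {L : Filter ι} {μ : ProbabilityMeasure Ω}
  {μs : ι → ProbabilityMeasure Ω}

/-- The portmanteau inequality `μ U ≤ liminf μs U` for open `U` makes the support lower
semicontinuous along weak convergence. -/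
lemma eventually_inter_support_nonempty [HereditarilyLindelofSpace Ω]
    (hμs : Tendsto μs L (𝓝 μ)) {U : Set Ω} (hU : IsOpen U)
    (hμU : (U ∩ (μ : Measure Ω).support).Nonempty) :
    ∀ᶠ i in L, (U ∩ (μs i : Measure Ω).support).Nonempty := by
  obtain ⟨z, hzU, hz⟩ := hμU
  have hpos : 0 < (μ : Measure Ω) U :=
    (Measure.mem_support_iff_forall z).mp hz U (hU.mem_nhds hzU)
  have hliminf := hpos.trans_le (le_liminf_measure_open_of_tendsto hμs hU)
  exact (eventually_lt_of_lt_liminf hliminf).mono fun i hi =>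
    Measure.nonempty_inter_support_of_pos hi

lemma eventually_exists_mem_support_of_mem_support [HereditarilyLindelofSpace Ω]
    {κ : Type*} [Finite κ] (hμs : Tendsto μs L (𝓝 μ)) {W : Set (κ → Ω)} (hW : IsOpen W)
    {p : κ → Ω} (hpW : p ∈ W) (hp : ∀ k, p k ∈ (μ : Measure Ω).support) :
    ∀ᶠ i in L, ∃ q ∈ W, ∀ k, q k ∈ (μs i : Measure Ω).support := by
  obtain ⟨U, hU, hUW⟩ := isOpen_pi_iff'.mp hW p hpW
  have hev : ∀ᶠ i in L, ∀ k, (U k ∩ (μs i : Measure Ω).support).Nonempty :=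
    eventually_all.mpr fun k =>
      eventually_inter_support_nonempty hμs (hU k).1 ⟨p k, (hU k).2, hp k⟩
  refine hev.mono fun i hi => ?_
  choose q hqU hqS using hi
  exact ⟨q, hUW fun k _ => hqU k, hqS⟩

end MeasureTheory.ProbabilityMeasure

theorem support_limit_cMonotone_general
    {X Y : Type*} [TopologicalSpace X] [PolishSpace X] [MeasurableSpace X] [BorelSpace X]
    [TopologicalSpace Y] [PolishSpace Y] [MeasurableSpace Y] [BorelSpace Y]
    (c : X × Y → ENNReal) (hc : Continuous c)
    (πn : ℕ → ProbabilityMeasure (X × Y)) (π : ProbabilityMeasure (X × Y))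
    (hconv : Tendsto πn atTop (𝓝 π))
    (hmono : ∀ n, CMonotone c (msupport (πn n : Measure (X × Y)))) :
    CMonotone c (msupport (π : Measure (X × Y))) := by
  intro m hm x y hxy σ
  by_contra! hlt
  obtain ⟨n, q, hqlt, hq⟩ :=
    (ProbabilityMeasure.eventually_exists_mem_support_of_mem_support hconv
      (isOpen_setOf_sum_comp_perm_lt hc σ) (p := fun i => (x i, y i)) hlt
      (by simpa only [← msupport_eq_support] using hxy)).exists
  rw [← msupport_eq_support] at hq
  exact hqlt.not_ge (hmono n m hm (fun i => (q i).1) (fun i => (q i).2) hq σ)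

/-- if πₙ → π weakly and each supp πₙ is c-monotone (c continuous,
finitely valued), then supp π is c-monotone. -/
theorem support_limit_cMonotone
    {X Y : Type*} [TopologicalSpace X] [PolishSpace X] [MeasurableSpace X] [BorelSpace X]
    [TopologicalSpace Y] [PolishSpace Y] [MeasurableSpace Y] [BorelSpace Y]
    (c : X × Y → ENNReal) (hc : Continuous c) (hfin : ∀ p, c p ≠ ⊤)
    (πn : ℕ → ProbabilityMeasure (X × Y)) (π : ProbabilityMeasure (X × Y))
    (hconv : Tendsto πn atTop (𝓝 π))
    (hmono : ∀ n, CMonotone c (msupport (πn n : Measure (X × Y)))) :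
    CMonotone c (msupport (π : Measure (X × Y))) :=
  support_limit_cMonotone_general c hc πn π hconv hmono
end
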